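/- A simplicial set X is lower 2-Segal if and only if its lower décalage dec_⊥X is Segal. -/

import Mathlib

open CategoryTheory Simplicial

universe u

/-- A commuting square of sets (top `f`, left `g`, right `h`, bottom `k`) is a pullback
if the canonical map to the fiber product is a bijection. -/
def IsPullbackSet {A B C D : Type u} (f : A → B) (g : A → C) (h : B → D) (k : C → D) : Prop :=
  (∀ a, h (f a) = k (g a)) ∧ ∀ (b : B) (c : C), h b = k c → ∃! a : A, f a = b ∧ g a = c

/-- The lower 2-Segal condition: for every `n ≥ 2` (here `n = m + 2`) and every `0 < i < n`,
the square with top `d_i : X_{n+1} → X_n`, left `d_{n+1} : X_{n+1} → X_n`,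
right `d_n : X_n → X_{n-1}`, bottom `d_i : X_n → X_{n-1}` is a pullback. -/
def LowerTwoSegal (X : SSet.{u}) : Prop :=
  ∀ (m i : ℕ), 0 < i → ∀ h2 : i < m + 2,
    IsPullbackSet
      (fun x => X.δ (⟨i, by omega⟩ : Fin (m + 4)) x)
      (fun x => X.δ (⟨m + 3, by omega⟩ : Fin (m + 4)) x)
      (fun x => X.δ (⟨m + 2, by omega⟩ : Fin (m + 3)) x)
      (fun x => X.δ (⟨i, by omega⟩ : Fin (m + 3)) x)

/-- The Segal condition for the lower décalage `dec⊥ X` (which has `(dec⊥ X)_n = X_{n+1}`,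
with `k`-th face `d_{k+1} : X_{n+1} → X_n` for `0 ≤ k ≤ n`), stated explicitly in terms of
`X`: for every `n ≥ 1` (here `n = m + 1`), the Segal square of `dec⊥ X` with
top `d_0`, left `d_{n+1}`, right `d_n`, bottom `d_0` is the square with
top `d_1 : X_{m+3} → X_{m+2}`, left `d_{m+3} : X_{m+3} → X_{m+2}`,
right `d_{m+2} : X_{m+2} → X_{m+1}`, bottom `d_1 : X_{m+2} → X_{m+1}`. -/
def LowerDecSegal (X : SSet.{u}) : Prop :=
  ∀ m : ℕ,
    IsPullbackSet
      (fun x => X.δ (1 : Fin (m + 4)) x)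
      (fun x => X.δ (⟨m + 3, by omega⟩ : Fin (m + 4)) x)
      (fun x => X.δ (⟨m + 2, by omega⟩ : Fin (m + 3)) x)
      (fun x => X.δ (1 : Fin (m + 3)) x)

/-!
Both conditions concern the squares `D(m, i)` with top `d_i`, left `d_{m+3}`, right `d_{m+2}`
and bottom `d_i`; `dec⊥ X` is Segal iff every `D(m, 1)` is a pullback. Pasting `D(m+1, 1)`
with `D(m, i)` gives, by `d_i d_1 = d_1 d_{i+1}`, the pasting of `D(m+1, i+1)` with `D(m, 1)`,
so by the pasting lemma the squares `D(m, 1)` determine all `D(m, i)`, `0 < i < m + 2`,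
by induction on `i`.
-/

namespace IsPullbackSet

variable {A B C D B' D' : Type u} {f : A → B} {g : A → C} {h : B → D} {k : C → D}
  {f' : B → B'} {h' : B' → D'} {k' : D → D'}

theorem paste_horiz (hl : IsPullbackSet f g h k) (hr : IsPullbackSet f' h h' k') :
    IsPullbackSet (f' ∘ f) g h' (k' ∘ k) := by
  obtain ⟨commₗ, uniqₗ⟩ := hl
  obtain ⟨commᵣ, uniqᵣ⟩ := hr
  refine ⟨fun a => by simp only [Function.comp_apply, commᵣ, commₗ], fun b' c hbc => ?_⟩
  obtain ⟨b, ⟨rfl, hb⟩, hb_uniq⟩ := uniqᵣ b' (k c) hbc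
  obtain ⟨a, ⟨rfl, rfl⟩, ha_uniq⟩ := uniqₗ b c hb
  refine ⟨a, ⟨rfl, rfl⟩, fun a' ⟨ha'₁, ha'₂⟩ => ha_uniq a' ⟨?_, ha'₂⟩⟩
  exact hb_uniq (f a') ⟨ha'₁, by rw [commₗ, ha'₂]⟩

theorem of_right (hc : IsPullbackSet (f' ∘ f) g h' (k' ∘ k)) (comm : ∀ a, h (f a) = k (g a))
    (hr : IsPullbackSet f' h h' k') : IsPullbackSet f g h k := by
  obtain ⟨-, uniqc⟩ := hc
  obtain ⟨commᵣ, uniqᵣ⟩ := hr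
  refine ⟨comm, fun b c hbc => ?_⟩
  obtain ⟨a, ⟨ha₁, rfl⟩, ha_uniq⟩ :=
    uniqc (f' b) c (by simp only [Function.comp_apply, ← hbc, commᵣ])
  have hfa : f a = b := (uniqᵣ (f' b) (k (g a)) (by rw [commᵣ, hbc])).unique
    ⟨ha₁, comm a⟩ ⟨rfl, hbc⟩
  refine ⟨a, ⟨hfa, rfl⟩, fun a' ⟨ha'₁, ha'₂⟩ => ha_uniq a' ⟨?_, ha'₂⟩⟩
  simp only [Function.comp_apply, ha'₁]

end IsPullbackSet

namespace SSet

variable (X : SSet.{u})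

def LowerSquareIsPullback (m : ℕ) (i : Fin (m + 3)) : Prop :=
  IsPullbackSet (fun x => X.δ i.castSucc x) (fun x => X.δ (Fin.last (m + 3)) x)
    (fun x => X.δ (Fin.last (m + 2)) x) (fun x => X.δ i x)

variable {X}

theorem LowerSquareIsPullback.succ {m : ℕ} {i : Fin (m + 3)} (hi : i ≠ 0)
    (hD : X.LowerSquareIsPullback m i) (hD₁ : X.LowerSquareIsPullback m 1)
    (hD₁' : X.LowerSquareIsPullback (m + 1) 1) : X.LowerSquareIsPullback (m + 1) i.succ := by
  have h1i : (1 : Fin (m + 3)) ≤ i := Fin.one_le_of_ne_zero hi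
  refine .of_right ?_ (fun x => (δ_comp_δ_apply (Fin.le_last _) x).symm) hD₁
  convert hD₁'.paste_horiz hD using 1 <;> funext x
  · simpa only [Function.comp_apply, Fin.castSucc_one, Fin.succ_castSucc] using
      δ_comp_δ_apply (i := (1 : Fin (m + 4))) (j := i.castSucc)
        (by simpa only [← Fin.castSucc_one, Fin.castSucc_le_castSucc_iff] using h1i) x
  · simpa only [Function.comp_apply, Fin.castSucc_one] using
      δ_comp_δ_apply (i := (1 : Fin (m + 3))) (j := i) h1i x

theorem lowerDecSegal_iff : LowerDecSegal X ↔ ∀ m, X.LowerSquareIsPullback m 1 := by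
  simp only [LowerDecSegal, LowerSquareIsPullback, Fin.castSucc_one]
  rfl

theorem lowerTwoSegal_of_forall_lowerSquareIsPullback_one
    (h : ∀ m, X.LowerSquareIsPullback m 1) : LowerTwoSegal X := by
  suffices ∀ m i, 0 < i → ∀ him : i < m + 2, X.LowerSquareIsPullback m ⟨i, by omega⟩ from this
  intro m i hi
  induction i, hi using Nat.le_induction generalizing m with
  | base =>
    intro _
    have h1 : (⟨1, by omega⟩ : Fin (m + 3)) = 1 := by ext; simp
    exact h1 ▸ h m
  | succ i hi ih =>
    intro him
    obtain ⟨m, rfl⟩ : ∃ m', m = m' + 1 := ⟨m - 1, by omega⟩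
    have hi0 : (⟨i, by omega⟩ : Fin (m + 3)) ≠ 0 := Fin.ne_of_val_ne (by simp; omega)
    simpa only [Fin.succ_mk] using (ih m (by omega)).succ hi0 (h m) (h (m + 1))

end SSet

/-- A simplicial set `X` is lower 2-Segal if and only if its lower décalage `dec⊥ X`
is Segal. -/
theorem lowerTwoSegal_iff_lowerDec_segal (X : SSet.{u}) :
    LowerTwoSegal X ↔ LowerDecSegal X := by
  rw [X.lowerDecSegal_iff]
  exact ⟨fun h m => h m 1 one_pos (by omega),
    X.lowerTwoSegal_of_forall_lowerSquareIsPullback_one⟩
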